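/- arXiv:0908.1909 — 2 statements merged into one kernel-verified Lean document; each statement's English description precedes it below -/
import Mathlib

section
/- Let p be a continuous strictly positive probability density on ℝ with CDF P. For z ∈ ℝ, the function f_z defined by f_z(x) = (1 - P(z)) P(x)/p(x) for x ≤ z and f_z(x) = P(z)(1 - P(x))/p(x) for x ≥ z solves the equation f_z'(x) + (p'(x)/p(x)) f_z(x) = 1_{(-∞,z]}(x) - P(z) for all x ≠ z where p is differentiable. -/
open MeasureTheory Set Filter

/- The Stein operator `f ↦ f' + (p'/p) f` equals `(p f)'/p`, and on either side of `z` the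
function `p f_z` is a constant multiple of `P` or of `1 - P`, whose derivative is `±p`. -/

theorem hasDerivAt_integral_Iic {f : ℝ → ℝ} {x : ℝ} (hf : Integrable f)
    (hfx : ContinuousAt f x) : HasDerivAt (fun y => ∫ t in Iic y, f t) (f x) x := by
  have hsplit : ∀ y, ∫ t in Iic y, f t = (∫ t in Iic x, f t) + ∫ t in x..y, f t := fun y => by
    rw [← intervalIntegral.integral_Iic_sub_Iic hf.integrableOn hf.integrableOn]
    ring
  have hFTC : HasDerivAt (fun y => ∫ t in x..y, f t) (f x) x :=
    intervalIntegral.integral_hasDerivAt_right hf.intervalIntegrable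
      hf.1.stronglyMeasurableAtFilter hfx
  exact (hFTC.const_add _).congr_of_eventuallyEq (Eventually.of_forall hsplit)

theorem exists_hasDerivAt_div_add_logDeriv_mul {F p : ℝ → ℝ} {F' p' x : ℝ}
    (hF : HasDerivAt F F' x) (hp : HasDerivAt p p' x) (hpx : p x ≠ 0) :
    ∃ d, HasDerivAt (fun y => F y / p y) d x ∧ d + p' / p x * (F x / p x) = F' / p x :=
  ⟨_, hF.div hp hpx, by field_simp; ring⟩

/-- The piecewise function `f_z(x) = (1-P(z)) P(x)/p(x)` for `x ≤ z`,
`f_z(x) = P(z)(1-P(x))/p(x)` for `x ≥ z` solves the Stein equation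
`f_z'(x) + (p'(x)/p(x)) f_z(x) = 1_{(-∞,z]}(x) - P(z)` for `x ≠ z` where `p` is
differentiable. -/
theorem stmt7 (p p' : ℝ → ℝ) (hp : Continuous p) (hppos : ∀ x, 0 < p x)
    (hprob : ∫ x : ℝ, p x = 1) (z : ℝ) :
    ∀ x : ℝ, x ≠ z → HasDerivAt p (p' x) x →
      ∃ d : ℝ,
        HasDerivAt
          (fun y : ℝ =>
            if y ≤ z then (1 - ∫ t in Set.Iic z, p t) * (∫ t in Set.Iic y, p t) / p y
            else (∫ t in Set.Iic z, p t) * (1 - ∫ t in Set.Iic y, p t) / p y) d x ∧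
        d + (p' x / p x) *
            (if x ≤ z then (1 - ∫ t in Set.Iic z, p t) * (∫ t in Set.Iic x, p t) / p x
             else (∫ t in Set.Iic z, p t) * (1 - ∫ t in Set.Iic x, p t) / p x)
          = (if x ≤ z then 1 else 0) - ∫ t in Set.Iic z, p t := by
  intro x hxz hp'x
  set P : ℝ → ℝ := fun y => ∫ t in Iic y, p t
  have hP : HasDerivAt P (p x) x :=
    hasDerivAt_integral_Iic (.of_integral_ne_zero (by simp [hprob])) hp.continuousAt
  have hpx := (hppos x).ne'
  rcases hxz.lt_or_gt with hlt | hgt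
  · obtain ⟨d, hd, hstein⟩ :=
      exists_hasDerivAt_div_add_logDeriv_mul (hP.const_mul (1 - P z)) hp'x hpx
    refine ⟨d, hd.congr_of_eventuallyEq ?_, ?_⟩
    · filter_upwards [Iio_mem_nhds hlt] with y hy
      simp [P, (mem_Iio.mp hy).le]
    · simp only [if_pos hlt.le, P] at hstein ⊢
      rw [hstein]
      field_simp
  · obtain ⟨d, hd, hstein⟩ :=
      exists_hasDerivAt_div_add_logDeriv_mul ((hP.const_sub 1).const_mul (P z)) hp'x hpx
    refine ⟨d, hd.congr_of_eventuallyEq ?_, ?_⟩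
    · filter_upwards [Ioi_mem_nhds hgt] with y hy
      simp [P, not_le.mpr (mem_Ioi.mp hy)]
    · simp only [if_neg (not_le.mpr hgt), P] at hstein ⊢
      rw [hstein]
      field_simp
      ring
end

section
/- For k ≥ 1, a_k > 0, p(x) = b_k exp(-a_k x^{2k}) with CDF P, and z ≥ 0, the solution f_z of the Stein equation f_z'(x) - 2k a_k x^{2k-1} f_z(x) = 1_{(-∞,z]}(x) - P(z) satisfies 0 < f_z(x) ≤ 1/(2 b_k) for all x ∈ ℝ. -/
/-!
Write `g(t) = exp(-a t^{2k})` and `P` for the CDF of `b g`. Both branches of `f_z(x)` are at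
most `min(P(x), 1 - P(x)) e^{a x^{2k}} / b`, and since `g` is even it suffices to bound
`e^{a x^{2k}} P(x)` for `x ≤ 0`. For `t ≤ x ≤ 0` superadditivity of `s ↦ s^{2k}` on `[0, ∞)` gives
`e^{a x^{2k}} g(t) ≤ g(t - x)`, so shifting by `x` yields
`e^{a x^{2k}} ∫_{-∞}^x g ≤ ∫_{-∞}^0 g = (∫ g) / 2`, i.e. `e^{a x^{2k}} P(x) ≤ 1/2`.
-/

open MeasureTheory Set

section IntegralIic

variable {g : ℝ → ℝ}

theorem integral_Ioi_eq_integral_Iic_neg (hg : Function.Even g) (y : ℝ) :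
    ∫ t in Ioi y, g t = ∫ t in Iic (-y), g t := by
  rw [← integral_comp_neg_Ioi]
  exact setIntegral_congr_fun measurableSet_Ioi fun t _ => (hg t).symm

theorem integral_Iic_zero_eq_half (hg : Function.Even g) (hint : Integrable g) :
    ∫ t in Iic 0, g t = (∫ t, g t) / 2 := by
  have h := intervalIntegral.integral_Iic_add_Ioi (b := 0) hint.integrableOn hint.integrableOn
  rw [integral_Ioi_eq_integral_Iic_neg hg, neg_zero] at h
  linarith

theorem mul_integral_Iic_le_integral_Iic_zero (hint : Integrable g) {c x : ℝ}
    (h : ∀ t ≤ x, c * g t ≤ g (t - x)) : c * ∫ t in Iic x, g t ≤ ∫ t in Iic 0, g t := by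
  have hshift : ∫ t in Iic x, g (t - x) = ∫ t in Iic 0, g t := by
    simpa using (measurePreserving_sub_right volume x).setIntegral_preimage_emb
      (MeasurableEquiv.subRight x).measurableEmbedding g (Iic 0)
  rw [← hshift, ← integral_const_mul]
  exact setIntegral_mono_on (hint.const_mul c).integrableOn (hint.comp_sub_right x).integrableOn
    measurableSet_Iic h

end IntegralIic

theorem setIntegral_exp_pos {f : ℝ → ℝ} {s : Set ℝ} (hs : volume s ≠ 0)
    (hf : IntegrableOn (fun t => Real.exp (f t)) s) : 0 < ∫ t in s, Real.exp (f t) :=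
  have : NeZero (volume s) := ⟨hs⟩
  integral_exp_pos hf

section ExpNegPow

variable {a : ℝ} {n : ℕ}

theorem integrable_exp_neg_mul_pow (ha : 0 < a) (hn : Even n) (hn0 : n ≠ 0) :
    Integrable fun t : ℝ => Real.exp (-a * t ^ n) := by
  refine ((integrable_exp_neg_mul_sq ha).const_mul (Real.exp a)).mono'
    (by fun_prop) (Filter.Eventually.of_forall fun t => ?_)
  rw [Real.norm_of_nonneg (Real.exp_pos _).le, ← Real.exp_add, Real.exp_le_exp]
  rcases le_or_gt (t ^ 2) 1 with h | h
  · nlinarith [hn.pow_nonneg t]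
  · obtain ⟨m, rfl⟩ := hn
    have : t ^ 2 ≤ t ^ (m + m) := by
      rw [← two_mul, pow_mul]
      exact le_self_pow₀ h.le (by omega)
    nlinarith

theorem pow_add_pow_sub_le_pow (hn : Even n) (hn0 : n ≠ 0) {t x : ℝ} (htx : t ≤ x)
    (hx : x ≤ 0) : x ^ n + (t - x) ^ n ≤ t ^ n := by
  have h := pow_add_pow_le (neg_nonneg.2 hx) (sub_nonneg.2 htx) hn0
  rwa [show -x + (x - t) = -t by ring, hn.neg_pow, hn.neg_pow, ← hn.neg_pow (x - t), neg_sub]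
    at h

theorem integral_Iic_mul_exp_le (ha : 0 < a) (hn : Even n) (hn0 : n ≠ 0) {x : ℝ}
    (hx : x ≤ 0) :
    (∫ t in Iic x, Real.exp (-a * t ^ n)) * Real.exp (a * x ^ n) ≤
      (∫ t, Real.exp (-a * t ^ n)) / 2 := by
  have heven : Function.Even fun t : ℝ => Real.exp (-a * t ^ n) := fun t => by
    simp only [hn.neg_pow]
  rw [mul_comm, ← integral_Iic_zero_eq_half heven (integrable_exp_neg_mul_pow ha hn hn0)]
  refine mul_integral_Iic_le_integral_Iic_zero (integrable_exp_neg_mul_pow ha hn hn0)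
    fun t htx => ?_
  rw [← Real.exp_add, Real.exp_le_exp]
  nlinarith [pow_add_pow_sub_le_pow hn hn0 htx hx]

theorem min_integral_Iic_integral_Ioi_mul_exp_le (ha : 0 < a) (hn : Even n) (hn0 : n ≠ 0)
    (x : ℝ) :
    min (∫ t in Iic x, Real.exp (-a * t ^ n)) (∫ t in Ioi x, Real.exp (-a * t ^ n)) *
      Real.exp (a * x ^ n) ≤ (∫ t, Real.exp (-a * t ^ n)) / 2 := by
  rcases le_total x 0 with hx | hx
  · exact (mul_le_mul_of_nonneg_right (min_le_left _ _) (Real.exp_pos _).le).trans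
      (integral_Iic_mul_exp_le ha hn hn0 hx)
  · refine (mul_le_mul_of_nonneg_right (min_le_right _ _) (Real.exp_pos _).le).trans ?_
    rw [integral_Ioi_eq_integral_Iic_neg (fun t => by simp only [hn.neg_pow]), ← hn.neg_pow]
    exact integral_Iic_mul_exp_le ha hn hn0 (neg_nonpos.2 hx)

end ExpNegPow

theorem ite_mul_one_sub_pos_and_le_min {F : ℝ → ℝ} (hF : Monotone F) (h0 : ∀ y, 0 < F y)
    (h1 : ∀ y, F y < 1) (x z : ℝ) :
    0 < (if x ≤ z then (1 - F z) * F x else F z * (1 - F x)) ∧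
      (if x ≤ z then (1 - F z) * F x else F z * (1 - F x)) ≤ min (F x) (1 - F x) := by
  have := h0 x; have := h1 x; have := h0 z; have := h1 z
  split_ifs with hxz
  · have := hF hxz
    exact ⟨by nlinarith, le_min (by nlinarith) (by nlinarith)⟩
  · have := hF (le_of_not_ge hxz)
    exact ⟨by nlinarith, le_min (by nlinarith) (by nlinarith)⟩

theorem stmt8_general (k : ℕ) (hk : 1 ≤ k) (a b : ℝ) (ha : 0 < a)
    (hb : b = (∫ t : ℝ, Real.exp (-a * t ^ (2 * k)))⁻¹)
    (P : ℝ → ℝ) (hP : P = fun y => ∫ t in Set.Iic y, b * Real.exp (-a * t ^ (2 * k)))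
    (z : ℝ)
    (f : ℝ → ℝ)
    (hf : f = fun x =>
      if x ≤ z then (1 - P z) * P x * Real.exp (a * x ^ (2 * k)) / b
      else P z * (1 - P x) * Real.exp (a * x ^ (2 * k)) / b) :
    ∀ x : ℝ, 0 < f x ∧ f x ≤ 1 / (2 * b) := by
  have hint := integrable_exp_neg_mul_pow ha (even_two_mul k) (by omega)
  have hI := integral_exp_pos hint
  have hb0 : 0 < b := hb ▸ inv_pos.2 hI
  have hbI : b * ∫ t, Real.exp (-a * t ^ (2 * k)) = 1 := hb ▸ inv_mul_cancel₀ hI.ne'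
  have hPQ (y : ℝ) : P y = b * ∫ t in Iic y, Real.exp (-a * t ^ (2 * k)) := by
    rw [hP]; exact integral_const_mul _ _
  have hPR (y : ℝ) : 1 - P y = b * ∫ t in Ioi y, Real.exp (-a * t ^ (2 * k)) := by
    have hsplit := intervalIntegral.integral_Iic_add_Ioi (b := y) hint.integrableOn
      hint.integrableOn
    rw [hPQ]
    linear_combination -hbI - b * hsplit
  have hmono : Monotone P := fun s t hst => by
    rw [hPQ, hPQ]
    exact mul_le_mul_of_nonneg_left (setIntegral_mono_set hint.integrableOn
      (Filter.Eventually.of_forall fun _ => (Real.exp_pos _).le)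
      (Filter.Eventually.of_forall fun _ hr => le_trans hr hst)) hb0.le
  have h0 (y : ℝ) : 0 < P y := by
    rw [hPQ]; exact mul_pos hb0 (setIntegral_exp_pos (by simp) hint.integrableOn)
  have h1 (y : ℝ) : P y < 1 := by
    have := mul_pos hb0 (setIntegral_exp_pos (s := Ioi y) (by simp) hint.integrableOn)
    linarith [hPR y]
  intro x
  obtain ⟨hpos, hle⟩ := ite_mul_one_sub_pos_and_le_min hmono h0 h1 x z
  have hE := Real.exp_pos (a * x ^ (2 * k))
  have hmin : min (P x) (1 - P x) * Real.exp (a * x ^ (2 * k)) ≤ 1 / 2 := by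
    rw [hPR, hPQ, ← mul_min_of_nonneg _ _ hb0.le, mul_assoc]
    calc _ ≤ b * ((∫ t, Real.exp (-a * t ^ (2 * k))) / 2) := mul_le_mul_of_nonneg_left
          (min_integral_Iic_integral_Ioi_mul_exp_le ha (even_two_mul k) (by omega) x) hb0.le
      _ = 1 / 2 := by linear_combination hbI / 2
  have hf' : f x = (if x ≤ z then (1 - P z) * P x else P z * (1 - P x)) *
      Real.exp (a * x ^ (2 * k)) / b := by
    rw [hf]; dsimp only; split_ifs <;> ring
  rw [hf']
  refine ⟨div_pos (mul_pos hpos hE) hb0, ?_⟩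
  calc _ ≤ 1 / 2 / b := by
        gcongr; exact (mul_le_mul_of_nonneg_right hle hE.le).trans hmin
    _ = 1 / (2 * b) := by ring

/-- For `p(x) = b exp(-a x^{2k})` with CDF `P` and `z ≥ 0`, the solution
`f_z(x) = (1-P(z)) P(x) e^{a x^{2k}}/b` for `x ≤ z`, `= P(z)(1-P(x)) e^{a x^{2k}}/b`
for `x ≥ z`, of the Stein equation satisfies `0 < f_z(x) ≤ 1/(2b)` for all `x`. -/
theorem stmt8 (k : ℕ) (hk : 1 ≤ k) (a b : ℝ) (ha : 0 < a)
    (hb : b = (∫ t : ℝ, Real.exp (-a * t ^ (2 * k)))⁻¹)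
    (P : ℝ → ℝ) (hP : P = fun y => ∫ t in Set.Iic y, b * Real.exp (-a * t ^ (2 * k)))
    (z : ℝ) (hz : 0 ≤ z)
    (f : ℝ → ℝ)
    (hf : f = fun x =>
      if x ≤ z then (1 - P z) * P x * Real.exp (a * x ^ (2 * k)) / b
      else P z * (1 - P x) * Real.exp (a * x ^ (2 * k)) / b) :
    ∀ x : ℝ, 0 < f x ∧ f x ≤ 1 / (2 * b) :=
  stmt8_general k hk a b ha hb P hP z f hf
end
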